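/- arXiv:1803.10279 — 2 statements merged into one kernel-verified Lean document; each statement's English description precedes it below -/
import Mathlib

section
/- Strong duality (zero duality gap) for cone programs: let V and W be finite-dimensional real inner product spaces, K₁ ⊆ W and K₂ ⊆ V closed convex cones, φ : V → W a linear map with adjoint φ*, and b ∈ W, C ∈ V. Suppose there exists X₀ ∈ int(K₂) with b − φ(X₀) ∈ int(K₁*), and there exists y₀ ∈ int(K₁) with φ*(y₀) − C ∈ int(K₂*). Then the primal optimal value γ = sup{⟨C, X⟩ : b − φ(X) ∈ K₁*, X ∈ K₂} equals the dual optimal value β = inf{⟨b, y⟩ : φ*(y) − C ∈ K₂*, y ∈ K₁}. -/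
/-!
Weak duality gives `sup ≤ inf`. For the converse let `γ` be the primal value and separate the
point `(γ, 0)` from the open convex set of pairs `(r, w)` for which some `X ∈ K₂` has objective
above `r` and is strictly feasible for the perturbed right-hand side `b + w`. The primal Slater
point lies in this set at height `⟪C, X₀⟫ - 1 < γ`, so the separating hyperplane is not vertical
and can be normalised to `r - ⟪z, w⟫ = γ`. Testing it along rays through the Slater point shows
that `z` is dual feasible with `⟪b, z⟫ ≤ γ`; closedness of `K₁` enters through `K₁** = K₁`.
-/

open RealInnerProductSpace Filter Topology

lemma csSup_eq_csInf_of_forall_le {α : Type*} [ConditionallyCompleteLattice α] {P D : Set α}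
    (hP : P.Nonempty) (hD : D.Nonempty) (hle : ∀ p ∈ P, ∀ d ∈ D, p ≤ d)
    (hgap : ∀ γ ∈ upperBounds P, ∃ d ∈ D, d ≤ γ) : sSup P = sInf D := by
  obtain ⟨p₀, hp₀⟩ := hP
  obtain ⟨d₀, hd₀⟩ := hD
  obtain ⟨d, hd, hdP⟩ := hgap (sSup P) fun p hp => le_csSup ⟨d₀, fun p hp => hle p hp d₀ hd₀⟩ hp
  exact le_antisymm (csSup_le ⟨p₀, hp₀⟩ fun p hp => le_csInf ⟨d₀, hd₀⟩ (hle p hp))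
    ((csInf_le ⟨p₀, hle p₀ hp₀⟩ hd).trans hdP)

lemma nonpos_of_forall_pos_add_mul_lt {a b M : ℝ} (h : ∀ c > 0, a + c * b < M) : b ≤ 0 := by
  by_contra! hb
  have hlim : Tendsto (fun c : ℝ => a + c * b) atTop atTop :=
    tendsto_atTop_add_const_left _ a (tendsto_id.atTop_mul_const hb)
  obtain ⟨c, hcM, hc⟩ := ((hlim.eventually_ge_atTop M).and (eventually_gt_atTop 0)).exists
  exact (h c hc).not_ge hcM

lemma le_of_forall_pos_add_mul_lt {a b M : ℝ} (h : ∀ c > 0, a + c * b < M) : a ≤ M := by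
  have hlim : Tendsto (fun c : ℝ => a + c * b) (𝓝[>] 0) (𝓝 a) := by
    have : Continuous fun c : ℝ => a + c * b := by fun_prop
    simpa using (this.tendsto 0).mono_left nhdsWithin_le_nhds
  exact le_of_tendsto hlim (eventually_nhdsWithin_of_forall fun c hc => (h c hc).le)

lemma combo_lt_combo {a a' r r' t t' : ℝ} (ha : 0 ≤ a) (ha' : 0 ≤ a') (haa : a + a' = 1)
    (hr : r < t) (hr' : r' < t') : a * r + a' * r' < a * t + a' * t' := by
  rcases ha.eq_or_lt with rfl | ha
  · simp_all
  · nlinarith [mul_le_mul_of_nonneg_left hr'.le ha']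

namespace ConvexCone

section Interior

variable {E : Type*} [AddCommGroup E] [Module ℝ E] [TopologicalSpace E] (K : ConvexCone ℝ E)

lemma add_mem_interior [ContinuousAdd E] {x y : E} (hx : x ∈ interior (K : Set E)) (hy : y ∈ K) :
    x + y ∈ interior (K : Set E) :=
  interior_maximal (by rintro _ ⟨x, hx, rfl⟩; exact K.add_mem (interior_subset hx) hy)
    (isOpenMap_add_right y _ isOpen_interior) ⟨x, hx, rfl⟩

lemma smul_mem_interior [ContinuousConstSMul ℝ E] {c : ℝ} (hc : 0 < c) {x : E}
    (hx : x ∈ interior (K : Set E)) : c • x ∈ interior (K : Set E) := by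
  refine interior_mono ?_ ((interior_smul₀ hc.ne' (K : Set E)).symm ▸ Set.smul_mem_smul_set hx)
  rintro _ ⟨y, hy, rfl⟩
  exact K.smul_mem hc hy

end Interior

lemma mem_of_mem_innerDual_innerDual {E : Type*} [NormedAddCommGroup E]
    [InnerProductSpace ℝ E] [CompleteSpace E] {K : ConvexCone ℝ E} (hne : (K : Set E).Nonempty)
    (hK : IsClosed (K : Set E)) {x : E}
    (hx : x ∈ ProperCone.innerDual (ProperCone.innerDual (K : Set E) : Set E)) : x ∈ K := by
  lift K to ProperCone ℝ E using ⟨hne, hK⟩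
  exact (ProperCone.innerDual_innerDual K).le hx

end ConvexCone

lemma exists_mul_add_inner_eq {W : Type*} [NormedAddCommGroup W] [InnerProductSpace ℝ W]
    [CompleteSpace W] (f : ℝ × W →L[ℝ] ℝ) :
    ∃ (a : ℝ) (y : W), ∀ r w, f (r, w) = a * r + ⟪y, w⟫ := by
  refine ⟨f (1, 0), (InnerProductSpace.toDual ℝ W).symm (f.comp (.inr ℝ ℝ W)), fun r w => ?_⟩
  have : ((r, w) : ℝ × W) = r • ((1 : ℝ), (0 : W)) + ((0 : ℝ), w) := by simp
  rw [this, map_add, map_smul, InnerProductSpace.toDual_symm_apply]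
  simp [mul_comm]

lemma exists_forall_fst_sub_inner_lt {W : Type*} [NormedAddCommGroup W] [InnerProductSpace ℝ W]
    [CompleteSpace W] {A : Set (ℝ × W)} (hA : IsOpen A) (hAc : Convex ℝ A) {γ r₀ : ℝ}
    (hγ : (γ, 0) ∉ A) (hr₀ : (r₀, 0) ∈ A) (hr₀γ : r₀ < γ) :
    ∃ z : W, ∀ p ∈ A, p.1 - ⟪z, p.2⟫ < γ := by
  obtain ⟨f, hf⟩ := geometric_hahn_banach_open_point hAc hA hγ
  obtain ⟨a, y, hfa⟩ := exists_mul_add_inner_eq f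
  have ha : 0 < a := by
    have := hf _ hr₀
    simp only [hfa, inner_zero_right, add_zero] at this
    nlinarith
  refine ⟨(-a⁻¹) • y, fun ⟨r, w⟩ hp => ?_⟩
  have hsep := hf _ hp
  simp only [hfa, inner_zero_right, add_zero] at hsep
  have : a⁻¹ * ⟪y, w⟫ < γ - r := by rw [inv_mul_lt_iff₀ ha]; linarith
  simp only [real_inner_smul_left]
  linarith

section ConeProgram

variable {V W : Type*} [NormedAddCommGroup V] [InnerProductSpace ℝ V]
  [NormedAddCommGroup W] [InnerProductSpace ℝ W] [CompleteSpace W]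
  (K₁ : ConvexCone ℝ W) (K₂ : ConvexCone ℝ V) (φ : V →ₗ[ℝ] W) (b : W) (C : V)

/-- The strict hypograph of the perturbation function
`w ↦ sup {⟪C, X⟫ | X ∈ K₂, b + w - φ X ∈ int K₁*}`. -/
def strictValueHypograph : Set (ℝ × W) :=
  {p | ∃ X ∈ K₂, p.1 < ⟪C, X⟫ ∧
    p.2 + b - φ X ∈ interior (ProperCone.innerDual (K₁ : Set W) : Set W)}

variable {K₁ K₂ φ b C}

lemma mem_strictValueHypograph {r : ℝ} {w : W} :
    (r, w) ∈ strictValueHypograph K₁ K₂ φ b C ↔ ∃ X ∈ K₂, r < ⟪C, X⟫ ∧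
      w + b - φ X ∈ interior (ProperCone.innerDual (K₁ : Set W) : Set W) :=
  Iff.rfl

variable (K₁ K₂ φ b C)

lemma isOpen_strictValueHypograph : IsOpen (strictValueHypograph K₁ K₂ φ b C) := by
  simp only [strictValueHypograph, Set.ofPred_exists, Set.ofPred_and]
  exact isOpen_iUnion fun X => isOpen_const.inter <|
    (isOpen_lt continuous_fst continuous_const).inter (isOpen_interior.preimage (by fun_prop))

lemma convex_strictValueHypograph : Convex ℝ (strictValueHypograph K₁ K₂ φ b C) := by
  rintro ⟨r, w⟩ ⟨X, hX, hr, hw⟩ ⟨r', w'⟩ ⟨X', hX', hr', hw'⟩ a a' ha ha' haa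
  refine ⟨a • X + a' • X', K₂.convex hX hX' ha ha' haa, ?_, ?_⟩
  · simpa [inner_add_right, real_inner_smul_right] using combo_lt_combo ha ha' haa hr hr'
  · have hcombo := (ProperCone.innerDual (K₁ : Set W)).convex.interior hw hw' ha ha' haa
    obtain rfl : a' = 1 - a := by linarith
    convert hcombo using 1
    simp only [Prod.smul_mk, Prod.mk_add_mk, map_add, map_smul]
    module

variable {K₁ K₂ φ b C}

lemma notMem_strictValueHypograph {γ : ℝ}
    (hγ : ∀ X ∈ K₂, b - φ X ∈ ProperCone.innerDual (K₁ : Set W) → ⟪C, X⟫ ≤ γ) :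
    (γ, 0) ∉ strictValueHypograph K₁ K₂ φ b C := by
  rintro ⟨X, hX, hlt, hint⟩
  rw [zero_add] at hint
  exact (hγ X hX (interior_subset hint)).not_gt hlt

variable {X₀ : V} {z : W} {γ : ℝ}

lemma mem_innerDual_innerDual_of_forall_lt (hX₀ : X₀ ∈ K₂)
    (hX₀b : b - φ X₀ ∈ interior (ProperCone.innerDual (K₁ : Set W) : Set W))
    (hz : ∀ p ∈ strictValueHypograph K₁ K₂ φ b C, p.1 - ⟪z, p.2⟫ < γ) :
    z ∈ ProperCone.innerDual (ProperCone.innerDual (K₁ : Set W) : Set W) := by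
  refine ProperCone.mem_innerDual.2 fun s hs => ?_
  refine neg_nonpos.1 (nonpos_of_forall_pos_add_mul_lt (a := ⟪C, X₀⟫ - 1) (M := γ) fun c hc => ?_)
  have hmem : (⟪C, X₀⟫ - 1, c • s) ∈ strictValueHypograph K₁ K₂ φ b C := by
    refine mem_strictValueHypograph.2 ⟨X₀, hX₀, sub_one_lt _, ?_⟩
    rw [show c • s + b - φ X₀ = (b - φ X₀) + c • s by abel]
    exact ConvexCone.add_mem_interior (ProperCone.innerDual (K₁ : Set W) : ConvexCone ℝ W) hX₀b
      ((ProperCone.innerDual (K₁ : Set W)).smul_mem hs hc.le)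
  have := hz _ hmem
  simp only [real_inner_smul_right, real_inner_comm s z] at this
  linarith

lemma sub_mem_innerDual_of_forall_lt [CompleteSpace V] {φadj : W →ₗ[ℝ] V}
    (hadj : ∀ (x : V) (y : W), ⟪φ x, y⟫ = ⟪x, φadj y⟫) (hX₀ : X₀ ∈ K₂)
    (hX₀b : b - φ X₀ ∈ interior (ProperCone.innerDual (K₁ : Set W) : Set W))
    (hz : ∀ p ∈ strictValueHypograph K₁ K₂ φ b C, p.1 - ⟪z, p.2⟫ < γ) :
    φadj z - C ∈ ProperCone.innerDual (K₂ : Set V) := by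
  refine ProperCone.mem_innerDual.2 fun X hX => ?_
  suffices ⟪C, X⟫ - ⟪φ X, z⟫ ≤ 0 by
    rw [inner_sub_right, ← hadj, real_inner_comm C X]
    linarith
  refine nonpos_of_forall_pos_add_mul_lt (a := ⟪C, X₀⟫ - 1) (M := γ) fun c hc => ?_
  have hmem : (⟪C, X₀⟫ + c * ⟪C, X⟫ - 1, c • φ X) ∈ strictValueHypograph K₁ K₂ φ b C := by
    refine mem_strictValueHypograph.2 ⟨X₀ + c • X, K₂.add_mem hX₀ (K₂.smul_mem hc hX), ?_, ?_⟩
    · rw [inner_add_right, real_inner_smul_right]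
      linarith
    · rwa [show c • φ X + b - φ (X₀ + c • X) = b - φ X₀ by rw [map_add, map_smul]; abel]
  have := hz _ hmem
  simp only [real_inner_smul_right, real_inner_comm (φ X) z] at this
  linarith

lemma inner_le_of_forall_lt (hX₀ : X₀ ∈ K₂)
    (hX₀b : b - φ X₀ ∈ interior (ProperCone.innerDual (K₁ : Set W) : Set W))
    (hz : ∀ p ∈ strictValueHypograph K₁ K₂ φ b C, p.1 - ⟪z, p.2⟫ < γ) :
    ⟪b, z⟫ ≤ γ := by
  refine le_of_forall_pos_add_mul_lt (b := ⟪C, X₀⟫ - 1 - ⟪b, z⟫) fun c hc => ?_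
  have hmem : (c * ⟪C, X₀⟫ - c, (c - 1) • b) ∈ strictValueHypograph K₁ K₂ φ b C := by
    refine mem_strictValueHypograph.2 ⟨c • X₀, K₂.smul_mem hc hX₀, ?_, ?_⟩
    · rw [real_inner_smul_right]
      linarith
    · rw [show (c - 1) • b + b - φ (c • X₀) = c • (b - φ X₀) by rw [map_smul]; module]
      exact ConvexCone.smul_mem_interior (ProperCone.innerDual (K₁ : Set W) : ConvexCone ℝ W) hc
        hX₀b
  have := hz _ hmem
  simp only [real_inner_smul_right, real_inner_comm b z] at this
  linarith

theorem exists_dual_feasible_inner_le_of_slater [CompleteSpace V] (hK₁ : IsClosed (K₁ : Set W))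
    (hK₁ne : (K₁ : Set W).Nonempty) {φadj : W →ₗ[ℝ] V}
    (hadj : ∀ (x : V) (y : W), ⟪φ x, y⟫ = ⟪x, φadj y⟫) (hX₀ : X₀ ∈ K₂)
    (hX₀b : b - φ X₀ ∈ interior (ProperCone.innerDual (K₁ : Set W) : Set W))
    (hγ : ∀ X ∈ K₂, b - φ X ∈ ProperCone.innerDual (K₁ : Set W) → ⟪C, X⟫ ≤ γ) :
    ∃ y ∈ K₁, φadj y - C ∈ ProperCone.innerDual (K₂ : Set V) ∧ ⟪b, y⟫ ≤ γ := by
  have hX₀mem : (⟪C, X₀⟫ - 1, 0) ∈ strictValueHypograph K₁ K₂ φ b C :=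
    mem_strictValueHypograph.2 ⟨X₀, hX₀, sub_one_lt _, by rwa [zero_add]⟩
  obtain ⟨z, hz⟩ := exists_forall_fst_sub_inner_lt (isOpen_strictValueHypograph K₁ K₂ φ b C)
    (convex_strictValueHypograph K₁ K₂ φ b C) (notMem_strictValueHypograph hγ) hX₀mem
    (by linarith [hγ X₀ hX₀ (interior_subset hX₀b)])
  exact ⟨z, K₁.mem_of_mem_innerDual_innerDual hK₁ne hK₁
    (mem_innerDual_innerDual_of_forall_lt hX₀ hX₀b hz),
    sub_mem_innerDual_of_forall_lt hadj hX₀ hX₀b hz, inner_le_of_forall_lt hX₀ hX₀b hz⟩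

lemma cone_program_weak_duality [CompleteSpace V] {φadj : W →ₗ[ℝ] V}
    (hadj : ∀ (x : V) (y : W), ⟪φ x, y⟫ = ⟪x, φadj y⟫) {X : V} {y : W} (hX : X ∈ K₂)
    (hXb : b - φ X ∈ ProperCone.innerDual (K₁ : Set W)) (hy : y ∈ K₁)
    (hyC : φadj y - C ∈ ProperCone.innerDual (K₂ : Set V)) : ⟪C, X⟫ ≤ ⟪b, y⟫ := by
  have hb : 0 ≤ ⟪y, b - φ X⟫ := hXb hy
  have hC : 0 ≤ ⟪X, φadj y - C⟫ := hyC hX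
  rw [inner_sub_right, real_inner_comm b y, real_inner_comm (φ X) y, hadj] at hb
  rw [inner_sub_right, real_inner_comm C X] at hC
  linarith

end ConeProgram

theorem cone_program_strong_duality_general
    {V W : Type*}
    [NormedAddCommGroup V] [InnerProductSpace ℝ V] [FiniteDimensional ℝ V]
    [NormedAddCommGroup W] [InnerProductSpace ℝ W] [FiniteDimensional ℝ W]
    (K₁ : ConvexCone ℝ W) (K₂ : ConvexCone ℝ V)
    (hK₁ : IsClosed (K₁ : Set W))
    (φ : V →ₗ[ℝ] W) (φadj : W →ₗ[ℝ] V)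
    (hadj : ∀ (x : V) (y : W), ⟪φ x, y⟫ = ⟪x, φadj y⟫)
    (b : W) (C : V)
    (hPrimalSlater : ∃ X₀ : V, X₀ ∈ interior (K₂ : Set V) ∧
      b - φ X₀ ∈ interior ((ProperCone.innerDual (K₁ : Set W)) : Set W))
    (hDualSlater : ∃ y₀ : W, y₀ ∈ interior (K₁ : Set W) ∧
      φadj y₀ - C ∈ interior ((ProperCone.innerDual (K₂ : Set V)) : Set V)) :
    sSup {r : ℝ | ∃ X : V, X ∈ K₂ ∧ b - φ X ∈ (ProperCone.innerDual (K₁ : Set W)) ∧ r = ⟪C, X⟫}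
      = sInf {r : ℝ | ∃ y : W, y ∈ K₁ ∧ φadj y - C ∈ (ProperCone.innerDual (K₂ : Set V)) ∧ r = ⟪b, y⟫} := by
  obtain ⟨X₀, hX₀, hX₀b⟩ := hPrimalSlater
  obtain ⟨y₀, hy₀, hy₀C⟩ := hDualSlater
  refine csSup_eq_csInf_of_forall_le ⟨_, X₀, interior_subset hX₀, interior_subset hX₀b, rfl⟩
    ⟨_, y₀, interior_subset hy₀, interior_subset hy₀C, rfl⟩ ?_ fun γ hγ => ?_
  · rintro _ ⟨X, hX, hXb, rfl⟩ _ ⟨y, hy, hyC, rfl⟩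
    exact cone_program_weak_duality hadj hX hXb hy hyC
  · obtain ⟨y, hy, hyC, hyγ⟩ := exists_dual_feasible_inner_le_of_slater hK₁
      ⟨y₀, interior_subset hy₀⟩ hadj (interior_subset hX₀) hX₀b
      fun X hX hXb => hγ ⟨X, hX, hXb, rfl⟩
    exact ⟨_, ⟨y, hy, hyC, rfl⟩, hyγ⟩

/-- Strong duality (zero duality gap) for cone programs under Slater conditions. -/
theorem cone_program_strong_duality
    {V W : Type*}
    [NormedAddCommGroup V] [InnerProductSpace ℝ V] [FiniteDimensional ℝ V]
    [NormedAddCommGroup W] [InnerProductSpace ℝ W] [FiniteDimensional ℝ W]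
    (K₁ : ConvexCone ℝ W) (K₂ : ConvexCone ℝ V)
    (hK₁ : IsClosed (K₁ : Set W)) (hK₂ : IsClosed (K₂ : Set V))
    (φ : V →ₗ[ℝ] W) (φadj : W →ₗ[ℝ] V)
    (hadj : ∀ (x : V) (y : W), ⟪φ x, y⟫ = ⟪x, φadj y⟫)
    (b : W) (C : V)
    (hPrimalSlater : ∃ X₀ : V, X₀ ∈ interior (K₂ : Set V) ∧
      b - φ X₀ ∈ interior ((ProperCone.innerDual (K₁ : Set W)) : Set W))
    (hDualSlater : ∃ y₀ : W, y₀ ∈ interior (K₁ : Set W) ∧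
      φadj y₀ - C ∈ interior ((ProperCone.innerDual (K₂ : Set V)) : Set V)) :
    sSup {r : ℝ | ∃ X : V, X ∈ K₂ ∧ b - φ X ∈ (ProperCone.innerDual (K₁ : Set W)) ∧ r = ⟪C, X⟫}
      = sInf {r : ℝ | ∃ y : W, y ∈ K₁ ∧ φadj y - C ∈ (ProperCone.innerDual (K₂ : Set V)) ∧ r = ⟪b, y⟫} :=
  cone_program_strong_duality_general K₁ K₂ hK₁ φ φadj hadj b C hPrimalSlater hDualSlater
end

section
/- Primal attainment for cone programs: let V and W be finite-dimensional real inner product spaces, K₁ ⊆ W and K₂ ⊆ V closed convex cones, φ : V → W a linear map with adjoint φ*, and b ∈ W, C ∈ V. Suppose there exists X₀ ∈ int(K₂) with b − φ(X₀) ∈ int(K₁*), and there exists y₀ ∈ int(K₁) with φ*(y₀) − C ∈ int(K₂*). Then there exists a primal-feasible point X* (i.e., X* ∈ K₂ and b − φ(X*) ∈ K₁*) such that ⟨C, X*⟩ = sup{⟨C, X⟩ : b − φ(X) ∈ K₁*, X ∈ K₂}; in particular the supremum is attained. -/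
/-!
Since `φ* y₀ - C` lies in the interior of `K₂*`, the functional `⟪φ* y₀ - C, ·⟫` grows at least
like `c ‖X‖` on `K₂` for some `c > 0`. Combined with weak duality `⟪X, φ* y₀⟫ ≤ ⟪b, y₀⟫` this gives
`⟪C, X⟫ ≤ ⟪b, y₀⟫ - c ‖X‖` on the primal feasible set, so the objective tends to `-∞` at infinity
on this closed, nonempty set, and the extreme value theorem provides a maximiser.
-/

open RealInnerProductSpace Filter

theorem exists_pos_mul_norm_le_inner_of_mem_interior_innerDual {E : Type*}
    [NormedAddCommGroup E] [InnerProductSpace ℝ E] [CompleteSpace E] {s : Set E} {d : E}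
    (hd : d ∈ interior (ProperCone.innerDual s : Set E)) :
    ∃ c > 0, ∀ x ∈ s, c * ‖x‖ ≤ ⟪x, d⟫ := by
  obtain ⟨ε, hε, hball⟩ := Metric.mem_nhds_iff.mp (mem_interior_iff_mem_nhds.mp hd)
  refine ⟨ε / 2, half_pos hε, fun x hx => ?_⟩
  rcases eq_or_ne x 0 with rfl | hx0
  · simp
  have hxn : 0 < ‖x‖ := norm_pos_iff.mpr hx0
  -- Moving `d` by `ε / 2` against the direction of `x` stays in the dual cone.
  have hmem : d - (ε / 2 / ‖x‖) • x ∈ ProperCone.innerDual s := by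
    apply hball
    rw [Metric.mem_ball, dist_eq_norm, sub_sub_cancel_left, norm_neg, norm_smul,
      Real.norm_of_nonneg (by positivity), div_mul_cancel₀ _ hxn.ne']
    exact half_lt_self hε
  have h := ProperCone.mem_innerDual.mp hmem hx
  rw [inner_sub_right, real_inner_smul_right, real_inner_self_eq_norm_sq] at h
  have hscale : ε / 2 / ‖x‖ * ‖x‖ ^ 2 = ε / 2 * ‖x‖ := by field_simp
  linarith

theorem ContinuousOn.exists_isMaxOn_of_le_sub_mul_norm {E : Type*} [SeminormedAddGroup E]
    [ProperSpace E] {f : E → ℝ} {s : Set E}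
    (hf : ContinuousOn f s) (hs : IsClosed s) (hne : s.Nonempty) {A c : ℝ} (hc : 0 < c)
    (hbound : ∀ x ∈ s, f x ≤ A - c * ‖x‖) : ∃ x ∈ s, IsMaxOn f s x := by
  obtain ⟨x₀, hx₀⟩ := hne
  refine hf.exists_isMaxOn' hs hx₀ ?_
  have hfar : ∀ᶠ x in cocompact E, (A - f x₀) / c ≤ ‖x‖ :=
    tendsto_norm_cocompact_atTop.eventually_ge_atTop _
  filter_upwards [hfar.filter_mono inf_le_left, mem_inf_of_right (mem_principal_self s)]
    with x hx hxs
  rw [div_le_iff₀ hc] at hx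
  linarith [hbound x hxs]

theorem inner_adjoint_le_of_mem_innerDual {V W : Type*}
    [NormedAddCommGroup V] [InnerProductSpace ℝ V] [NormedAddCommGroup W] [InnerProductSpace ℝ W]
    [CompleteSpace W] {s : Set W} {φ : V →ₗ[ℝ] W} {φadj : W →ₗ[ℝ] V}
    (hadj : ∀ x y, ⟪φ x, y⟫ = ⟪x, φadj y⟫)
    {b y : W} {x : V} (hy : y ∈ s) (hbx : b - φ x ∈ ProperCone.innerDual s) :
    ⟪x, φadj y⟫ ≤ ⟪b, y⟫ := by
  have h := ProperCone.mem_innerDual.mp hbx hy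
  rw [inner_sub_right, real_inner_comm b y, real_inner_comm (φ x) y, hadj] at h
  linarith

theorem cone_program_primal_attainment_general
    {V W : Type*}
    [NormedAddCommGroup V] [InnerProductSpace ℝ V] [FiniteDimensional ℝ V]
    [NormedAddCommGroup W] [InnerProductSpace ℝ W] [FiniteDimensional ℝ W]
    (K₁ : ConvexCone ℝ W) (K₂ : ConvexCone ℝ V)
    (hK₂ : IsClosed (K₂ : Set V))
    (φ : V →ₗ[ℝ] W) (φadj : W →ₗ[ℝ] V)
    (hadj : ∀ (x : V) (y : W), ⟪φ x, y⟫ = ⟪x, φadj y⟫)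
    (b : W) (C : V)
    (hPrimalSlater : ∃ X₀ : V, X₀ ∈ interior (K₂ : Set V) ∧
      b - φ X₀ ∈ interior (ProperCone.innerDual (K₁ : Set W) : Set W))
    (hDualSlater : ∃ y₀ : W, y₀ ∈ interior (K₁ : Set W) ∧
      φadj y₀ - C ∈ interior (ProperCone.innerDual (K₂ : Set V) : Set V)) :
    ∃ Xstar : V, Xstar ∈ K₂ ∧ b - φ Xstar ∈ ProperCone.innerDual (K₁ : Set W) ∧
      ⟪C, Xstar⟫ =
        sSup {r : ℝ | ∃ X : V, X ∈ K₂ ∧ b - φ X ∈ ProperCone.innerDual (K₁ : Set W) ∧ r = ⟪C, X⟫} := by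
  obtain ⟨X₀, hX₀, hbX₀⟩ := hPrimalSlater
  obtain ⟨y₀, hy₀, hd⟩ := hDualSlater
  obtain ⟨c, hc, hcoercive⟩ := exists_pos_mul_norm_le_inner_of_mem_interior_innerDual hd
  set F : Set V := {X | X ∈ K₂ ∧ b - φ X ∈ ProperCone.innerDual (K₁ : Set W)}
  have hF : IsClosed F := hK₂.inter <| (ProperCone.innerDual _).isClosed.preimage
    (continuous_const.sub φ.continuous_of_finiteDimensional)
  have hbound : ∀ X ∈ F, ⟪C, X⟫ ≤ ⟪b, y₀⟫ - c * ‖X‖ := fun X hX => by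
    have hweak := inner_adjoint_le_of_mem_innerDual hadj (interior_subset hy₀) hX.2
    have hgrowth := hcoercive X hX.1
    rw [inner_sub_right, real_inner_comm C X] at hgrowth
    linarith
  obtain ⟨Xstar, ⟨hXK, hbX⟩, hmax⟩ :=
    (continuous_const.inner continuous_id).continuousOn.exists_isMaxOn_of_le_sub_mul_norm hF
      ⟨X₀, interior_subset hX₀, interior_subset hbX₀⟩ hc hbound
  refine ⟨Xstar, hXK, hbX, (IsGreatest.csSup_eq ?_).symm⟩
  refine ⟨⟨Xstar, hXK, hbX, rfl⟩, ?_⟩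
  rintro r ⟨X, hX, hbX, rfl⟩
  exact hmax ⟨hX, hbX⟩

/-- Primal attainment for cone programs under Slater conditions. -/
theorem cone_program_primal_attainment
    {V W : Type*}
    [NormedAddCommGroup V] [InnerProductSpace ℝ V] [FiniteDimensional ℝ V]
    [NormedAddCommGroup W] [InnerProductSpace ℝ W] [FiniteDimensional ℝ W]
    (K₁ : ConvexCone ℝ W) (K₂ : ConvexCone ℝ V)
    (hK₁ : IsClosed (K₁ : Set W)) (hK₂ : IsClosed (K₂ : Set V))
    (φ : V →ₗ[ℝ] W) (φadj : W →ₗ[ℝ] V)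
    (hadj : ∀ (x : V) (y : W), ⟪φ x, y⟫ = ⟪x, φadj y⟫)
    (b : W) (C : V)
    (hPrimalSlater : ∃ X₀ : V, X₀ ∈ interior (K₂ : Set V) ∧
      b - φ X₀ ∈ interior (ProperCone.innerDual (K₁ : Set W) : Set W))
    (hDualSlater : ∃ y₀ : W, y₀ ∈ interior (K₁ : Set W) ∧
      φadj y₀ - C ∈ interior (ProperCone.innerDual (K₂ : Set V) : Set V)) :
    ∃ Xstar : V, Xstar ∈ K₂ ∧ b - φ Xstar ∈ ProperCone.innerDual (K₁ : Set W) ∧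
      ⟪C, Xstar⟫ =
        sSup {r : ℝ | ∃ X : V, X ∈ K₂ ∧ b - φ X ∈ ProperCone.innerDual (K₁ : Set W) ∧ r = ⟪C, X⟫} :=
  cone_program_primal_attainment_general K₁ K₂ hK₂ φ φadj hadj b C hPrimalSlater hDualSlater
end
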